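/- For every n ≥ 1, there exists a permutation w ∈ S_n with w(1) = 1 that attains the maximum of Υ over S_n, i.e. Υ_w ≥ Υ_v for all v ∈ S_n. -/

import Mathlib

/-!
Take a maximiser `w` of `Υ` and let `k + 1` be the position of the value `1` in `w`. Right
multiplication by the cycle `c_k = s_k ⋯ s_1` moves that value to the front and lowers the length
by `k`; the point is that it does not decrease `Υ`, so `w c_k` is again a maximiser, and it
fixes `1`.

That inequality `Υ_u ≤ Υ_{u c_k}` is proved by induction on `ℓ(u)` from the recursion
`ℓ(u) Υ_u = ∑_{a ∈ Des(u)} a Υ_{u s_a}`, obtained by splitting off the last letter of a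
reduced word. The descent `a = k` contributes `k Υ_{u s_k} ≤ k Υ_{u c_k}`, because
`u s_k c_{k-1} = u c_k`. Every other descent `a` of `u` yields the descent `a' ≥ a` of `u c_k`,
where `a' = a + 1` if `a < k` and `a' = a` otherwise, with `u s_a c_k = u c_k s_{a'}`; as
`a ↦ a'` is injective, the remaining terms add up to at most `ℓ(u c_k) Υ_{u c_k}`. Since
`ℓ(u) = k + ℓ(u c_k)`, the two bounds combine to `ℓ(u) Υ_u ≤ ℓ(u) Υ_{u c_k}`.
-/

open Equiv Finset

namespace Schubert

variable {n : ℕ}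

/-- Number of inversions of a permutation of `{0,...,n-1}`. -/
def len (w : Perm (Fin n)) : ℕ :=
  (Finset.univ.filter (fun p : Fin n × Fin n => p.1 < p.2 ∧ w p.2 < w p.1)).card

/-- One-based application: `app w i = w(i)` for `1 ≤ i ≤ n` (junk otherwise). -/
def app (w : Perm (Fin n)) (i : ℕ) : ℕ :=
  if h : i - 1 < n then ((w ⟨i - 1, h⟩ : Fin n) : ℕ) + 1 else i

/-- The adjacent transposition `s_i` (one-based), swapping positions `i` and `i+1`. -/
def s (n : ℕ) (i : ℕ) : Perm (Fin n) :=
  if h : 1 ≤ i ∧ i < n then Equiv.swap ⟨i - 1, by omega⟩ ⟨i, h.2⟩ else 1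

/-- The transposition `t_(a,b)` (one-based), swapping positions `a` and `b`. -/
def t (n : ℕ) (a b : ℕ) : Perm (Fin n) :=
  if h : 1 ≤ a ∧ a ≤ n ∧ 1 ≤ b ∧ b ≤ n then
    Equiv.swap ⟨a - 1, by omega⟩ ⟨b - 1, by omega⟩ else 1

/-- The longest permutation `w_0 = (n, n-1, ..., 1)`. -/
def w0 (n : ℕ) : Perm (Fin n) where
  toFun i := ⟨n - 1 - i.val, by have := i.isLt; omega⟩
  invFun i := ⟨n - 1 - i.val, by have := i.isLt; omega⟩
  left_inv i := by have := i.isLt; apply Fin.ext; show n - 1 - (n - 1 - i.val) = i.val; omega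
  right_inv i := by have := i.isLt; apply Fin.ext; show n - 1 - (n - 1 - i.val) = i.val; omega

/-- Descent set (one-based): `Des(w) = {i ∈ {1,...,n-1} : w(i) > w(i+1)}`. -/
def des (w : Perm (Fin n)) : Finset ℕ :=
  (Finset.Icc 1 (n - 1)).filter (fun i => app w (i + 1) < app w i)

/-- Major index. -/
def maj (w : Perm (Fin n)) : ℕ := ∑ i ∈ des w, i

open Classical in
/-- The principal Schubert specialization
`Υ_w = 𝔖_w(1,...,1) = (1/ℓ(w)!) ∑_{(a_1,...,a_{ℓ(w)}) ∈ R(w)} a_1 ⋯ a_{ℓ(w)}`,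
where a reduced word for `w` is a word of length `ℓ(w)` in letters `1,...,n-1`
whose product of adjacent transpositions is `w`. -/
noncomputable def Upsilon (w : Perm (Fin n)) : ℚ :=
  (∑ f : Fin (len w) → Fin (n - 1),
      if (List.ofFn (fun j => s n ((f j : ℕ) + 1))).prod = w then
        ∏ j, ((f j : ℚ) + 1)
      else 0)
    / (len w).factorial

lemma _root_.Finset.sum_le_sum_of_mapsTo_of_injOn {ι κ M : Type*} [AddCommMonoid M]
    [PartialOrder M] [IsOrderedAddMonoid M] {s : Finset ι} {t : Finset κ} {f : ι → M}
    {g : κ → M} (e : ι → κ) (hmaps : Set.MapsTo e s t) (hinj : Set.InjOn e s)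
    (hfg : ∀ i ∈ s, f i ≤ g (e i)) (hg : ∀ j ∈ t, 0 ≤ g j) :
    ∑ i ∈ s, f i ≤ ∑ j ∈ t, g j := by
  classical
  calc ∑ i ∈ s, f i ≤ ∑ i ∈ s, g (e i) := sum_le_sum hfg
    _ = ∑ j ∈ s.image e, g j := (sum_image hinj).symm
    _ ≤ ∑ j ∈ t, g j :=
      sum_le_sum_of_subset_of_nonneg (image_subset_iff.2 hmaps) fun j hj _ => hg j hj

lemma sum_fin_pred_eq_sum_Icc {M : Type*} [AddCommMonoid M] (f : ℕ → M) :
    ∑ x : Fin (n - 1), f (x + 1) = ∑ a ∈ Icc 1 (n - 1), f a := by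
  rw [Fin.sum_univ_eq_sum_range (fun x => f (x + 1)), range_eq_Ico, sum_Ico_add', zero_add,
    Ico_add_one_right_eq_Icc]

lemma s_apply_val {a : ℕ} (h1 : 1 ≤ a) (h2 : a < n) (x : Fin n) :
    (s n a x : ℕ) = if (x : ℕ) = a - 1 then a else if (x : ℕ) = a then a - 1 else x := by
  simp only [s, dif_pos (And.intro h1 h2), swap_apply_def, Fin.ext_iff]
  split_ifs <;> rfl

lemma s_eq_swap {a : ℕ} (h1 : 1 ≤ a) (h2 : a < n) :
    s n a = swap ⟨a - 1, by omega⟩ ⟨a, h2⟩ :=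
  dif_pos ⟨h1, h2⟩

lemma s_mul_self (n a : ℕ) : s n a * s n a = 1 := by
  unfold s
  split_ifs
  exacts [swap_mul_self _ _, one_mul 1]

lemma mul_s_eq_iff {v w : Perm (Fin n)} {a : ℕ} : v * s n a = w ↔ v = w * s n a := by
  rw [← mul_left_inj (s n a), mul_assoc, s_mul_self, mul_one]

lemma s_succ_apply_self {k : ℕ} (hk : k + 1 < n) :
    s n (k + 1) ⟨k, by omega⟩ = ⟨k + 1, hk⟩ := by
  ext
  rw [s_apply_val (by omega) hk]
  simp

lemma s_apply_of_ne {a k : ℕ} (hk : k < n) (hak : a ≠ k) (hak' : a ≠ k + 1) :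
    s n a ⟨k, hk⟩ = ⟨k, hk⟩ := by
  unfold s
  split_ifs
  · exact swap_apply_of_ne_of_ne (Fin.ne_of_val_ne (by dsimp only; omega))
      (Fin.ne_of_val_ne (by dsimp only; omega))
  · rfl

def inversions (w : Perm (Fin n)) : Finset (Fin n × Fin n) :=
  univ.filter fun p => p.1 < p.2 ∧ w p.2 < w p.1

lemma len_eq_card_inversions (w : Perm (Fin n)) : len w = #(inversions w) := rfl

@[simp]
lemma mem_inversions {w : Perm (Fin n)} {p : Fin n × Fin n} :
    p ∈ inversions w ↔ p.1 < p.2 ∧ w p.2 < w p.1 := by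
  simp [inversions]

lemma len_one : len (1 : Perm (Fin n)) = 0 :=
  card_eq_zero.2 <| filter_false_of_mem fun _ _ h => lt_asymm h.1 h.2

lemma swap_lt_swap_iff {i j a b : Fin n} (hij : (i : ℕ) + 1 = j)
    (hab : ¬(a = i ∧ b = j)) (hba : ¬(a = j ∧ b = i)) :
    swap i j a < swap i j b ↔ a < b := by
  simp only [swap_apply_def, Fin.lt_def, Fin.ext_iff] at *
  split_ifs <;> omega

lemma len_mul_swap {w : Perm (Fin n)} {i j : Fin n} (hij : (i : ℕ) + 1 = j)
    (hw : w j < w i) : len (w * swap i j) + 1 = len w := by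
  have hinv : (inversions w).erase (i, j) =
      (inversions (w * swap i j)).map ((swap i j).prodCongr (swap i j)).toEmbedding := by
    ext ⟨a, b⟩
    simp only [mem_erase, mem_inversions, mem_map_equiv, prodCongr_symm, prodCongr_apply,
      Prod.map, Perm.mul_apply, symm_swap, swap_apply_self, ne_eq, Prod.mk.injEq]
    by_cases hab : a = i ∧ b = j
    · simp [hab.1, hab.2, ← Fin.val_fin_lt, ← hij]
    by_cases hba : a = j ∧ b = i
    · obtain ⟨rfl, rfl⟩ := hba
      simp [hw.not_gt]
    rw [swap_lt_swap_iff hij hab hba]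
    tauto
  have hij_mem : (i, j) ∈ inversions w := mem_inversions.2 ⟨by simp [Fin.lt_def, ← hij], hw⟩
  rw [len_eq_card_inversions, len_eq_card_inversions, ← card_erase_add_one hij_mem, hinv,
    card_map]

lemma mem_des_iff {w : Perm (Fin n)} {a : ℕ} :
    a ∈ des w ↔ ∃ h : 1 ≤ a ∧ a < n, w ⟨a, h.2⟩ < w ⟨a - 1, by omega⟩ := by
  rw [des, mem_filter, mem_Icc]
  simp only [app, Fin.lt_def]
  constructor
  · rintro ⟨ha, hlt⟩
    refine ⟨⟨ha.1, by omega⟩, ?_⟩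
    rwa [dif_pos (by omega), dif_pos (by omega), add_lt_add_iff_right] at hlt
  · rintro ⟨ha, hlt⟩
    refine ⟨⟨ha.1, by omega⟩, ?_⟩
    rwa [dif_pos (by omega), dif_pos (by omega), add_lt_add_iff_right]

lemma len_mul_s_of_mem_des {w : Perm (Fin n)} {a : ℕ} (ha : a ∈ des w) :
    len (w * s n a) + 1 = len w := by
  obtain ⟨⟨h1, h2⟩, hlt⟩ := mem_des_iff.1 ha
  rw [s_eq_swap h1 h2]
  exact len_mul_swap (Nat.sub_add_cancel h1) hlt

lemma len_mul_s_of_not_mem_des {w : Perm (Fin n)} {a : ℕ} (h1 : 1 ≤ a) (h2 : a < n)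
    (ha : a ∉ des w) : len (w * s n a) = len w + 1 := by
  have hdes : a ∈ des (w * s n a) := by
    refine mem_des_iff.2 ⟨⟨h1, h2⟩, ?_⟩
    have hne : w ⟨a - 1, by omega⟩ ≠ w ⟨a, h2⟩ :=
      w.injective.ne (Fin.ne_of_val_ne (by dsimp only; omega))
    simp only [Perm.mul_apply, s_eq_swap h1 h2, swap_apply_left, swap_apply_right]
    exact lt_of_le_of_ne (not_lt.1 fun hlt => ha (mem_des_iff.2 ⟨⟨h1, h2⟩, hlt⟩)) hne
  have := len_mul_s_of_mem_des hdes
  rw [mul_assoc, s_mul_self, mul_one] at this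
  omega

lemma len_le_len_mul_s_add_one (w : Perm (Fin n)) {a : ℕ} (h1 : 1 ≤ a) (h2 : a < n) :
    len w ≤ len (w * s n a) + 1 := by
  by_cases ha : a ∈ des w
  · exact (len_mul_s_of_mem_des ha).ge
  · rw [len_mul_s_of_not_mem_des h1 h2 ha]
    omega

lemma mem_des_of_len_mul_s_lt {w : Perm (Fin n)} {a : ℕ} (h1 : 1 ≤ a) (h2 : a < n)
    (hlt : len (w * s n a) < len w) : a ∈ des w := by
  by_contra ha
  rw [len_mul_s_of_not_mem_des h1 h2 ha] at hlt
  omega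

lemma succ_mem_des_of_apply_eq_zero {u : Perm (Fin n)} {k : ℕ} (hk : k + 1 < n)
    (hu : (u ⟨k + 1, hk⟩ : ℕ) = 0) : k + 1 ∈ des u := by
  refine mem_des_iff.2 ⟨⟨by omega, hk⟩, ?_⟩
  have hne : (u ⟨k, by omega⟩ : ℕ) ≠ 0 := by
    rw [← hu]; simp [Fin.val_inj]
  simp only [Fin.lt_def, hu, Nat.add_sub_cancel]
  omega

lemma succ_not_mem_des_of_apply_eq_zero {u : Perm (Fin n)} {k : ℕ} (hk : k < n)
    (hu : (u ⟨k, hk⟩ : ℕ) = 0) : k + 1 ∉ des u := by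
  rintro hdes
  obtain ⟨_, hlt⟩ := mem_des_iff.1 hdes
  simp only [Fin.lt_def, Nat.add_sub_cancel, hu] at hlt
  omega

open Classical in
noncomputable def wordWeight (L : ℕ) (w : Perm (Fin n)) : ℚ :=
  ∑ f : Fin L → Fin (n - 1),
    if (List.ofFn (fun j => s n ((f j : ℕ) + 1))).prod = w then ∏ j, ((f j : ℚ) + 1) else 0

lemma wordWeight_len (w : Perm (Fin n)) :
    wordWeight (len w) w = (len w).factorial * Upsilon w := by
  rw [Upsilon, ← wordWeight, mul_div_cancel₀]
  positivity

lemma wordWeight_zero (w : Perm (Fin n)) : wordWeight 0 w = if 1 = w then 1 else 0 := by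
  simp [wordWeight]

lemma wordWeight_succ (L : ℕ) (w : Perm (Fin n)) :
    wordWeight (L + 1) w = ∑ a ∈ Icc 1 (n - 1), (a : ℚ) * wordWeight L (w * s n a) := by
  rw [← sum_fin_pred_eq_sum_Icc, wordWeight, ← (Fin.snocEquiv fun _ => Fin (n - 1)).sum_comp,
    Fintype.sum_prod_type]
  refine sum_congr rfl fun x _ => ?_
  rw [wordWeight, mul_sum]
  refine sum_congr rfl fun g _ => ?_
  simp only [Fin.snocEquiv_apply, List.ofFn_succ', Fin.snoc_castSucc, Fin.snoc_last,
    List.prod_concat, Fin.prod_univ_castSucc, mul_s_eq_iff]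
  split_ifs <;> push_cast <;> ring

lemma wordWeight_eq_zero_of_lt_len {L : ℕ} {w : Perm (Fin n)} (hL : L < len w) :
    wordWeight L w = 0 := by
  induction L generalizing w with
  | zero =>
    rw [wordWeight_zero, if_neg]
    rintro rfl
    simp [len_one] at hL
  | succ L ih =>
    rw [wordWeight_succ]
    refine sum_eq_zero fun a ha => ?_
    obtain ⟨h1, h2⟩ := mem_Icc.1 ha
    have := len_le_len_mul_s_add_one w h1 (by omega)
    rw [ih (by omega), mul_zero]

lemma Upsilon_nonneg (w : Perm (Fin n)) : 0 ≤ Upsilon w := by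
  unfold Upsilon
  positivity

lemma len_mul_Upsilon (w : Perm (Fin n)) :
    (len w : ℚ) * Upsilon w = ∑ a ∈ des w, (a : ℚ) * Upsilon (w * s n a) := by
  rcases hlen : len w with _ | L
  · rw [Nat.cast_zero, zero_mul, eq_comm]
    refine sum_eq_zero fun a ha => ?_
    have := len_mul_s_of_mem_des ha
    omega
  have hsum :
      wordWeight (L + 1) w = L.factorial * ∑ a ∈ des w, (a : ℚ) * Upsilon (w * s n a) := by
    rw [wordWeight_succ, mul_sum, des, sum_filter]
    refine sum_congr rfl fun a ha => ?_
    obtain ⟨h1, h2⟩ := mem_Icc.1 ha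
    split_ifs with hdes
    · have hlen' : len (w * s n a) = L := by
        have := len_mul_s_of_mem_des (mem_filter.2 ⟨ha, hdes⟩)
        omega
      rw [← hlen', wordWeight_len]
      ring
    · have hlen' := len_mul_s_of_not_mem_des h1 (by omega) (fun h => hdes (mem_filter.1 h).2)
      rw [wordWeight_eq_zero_of_lt_len (by omega), mul_zero]
  have hfac : (L.factorial : ℚ) ≠ 0 := by positivity
  rw [← hlen, wordWeight_len, hlen, Nat.factorial_succ] at hsum
  push_cast at hsum ⊢
  apply mul_left_cancel₀ hfac
  linear_combination hsum

/-- The cycle `c_k = s_k ⋯ s_1`: `u * frontCycle n k` moves the entry of `u` in (zero-based)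
position `k` to the front. -/
def frontCycle (n : ℕ) : ℕ → Perm (Fin n)
  | 0 => 1
  | k + 1 => s n (k + 1) * frontCycle n k

lemma frontCycle_apply_val {k : ℕ} (hk : k < n) (x : Fin n) :
    (frontCycle n k x : ℕ) =
      if (x : ℕ) = 0 then k else if (x : ℕ) ≤ k then x - 1 else x := by
  induction k with
  | zero => simp only [frontCycle, Perm.one_apply]; split_ifs <;> omega
  | succ k ih =>
    rw [frontCycle, Perm.mul_apply, s_apply_val (by omega) hk, ih (by omega)]
    split_ifs <;> omega

lemma len_mul_frontCycle {u : Perm (Fin n)} {k : ℕ} (hk : k < n)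
    (hu : (u ⟨k, hk⟩ : ℕ) = 0) :
    len (u * frontCycle n k) + k = len u := by
  induction k generalizing u with
  | zero => simp [frontCycle]
  | succ k ih =>
    have hv : ((u * s n (k + 1)) ⟨k, by omega⟩ : ℕ) = 0 := by
      rwa [Perm.mul_apply, s_succ_apply_self hk]
    have := ih (by omega) hv
    have := len_mul_s_of_mem_des (succ_mem_des_of_apply_eq_zero hk hu)
    rw [frontCycle, ← mul_assoc]
    omega

def shiftLetter (k a : ℕ) : ℕ := if a < k then a + 1 else a

lemma le_shiftLetter (k a : ℕ) : a ≤ shiftLetter k a := by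
  unfold shiftLetter
  split_ifs <;> omega

lemma shiftLetter_lt {k a : ℕ} (hk : k < n) (ha : a < n) : shiftLetter k a < n := by
  unfold shiftLetter
  split_ifs <;> omega

lemma shiftLetter_injOn (k : ℕ) : Set.InjOn (shiftLetter k) {a | a ≠ k} := by
  intro a ha b hb hab
  simp only [shiftLetter, Set.mem_ofPred_eq] at *
  split_ifs at hab <;> omega

lemma s_mul_frontCycle {a k : ℕ} (h1 : 1 ≤ a) (h2 : a < n) (hk : k < n) (hak : a ≠ k)
    (hak' : a ≠ k + 1) : s n a * frontCycle n k = frontCycle n k * s n (shiftLetter k a) := by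
  have h1' := h1.trans (le_shiftLetter k a)
  ext x
  simp only [Perm.mul_apply, s_apply_val h1 h2, s_apply_val h1' (shiftLetter_lt hk h2),
    frontCycle_apply_val hk]
  unfold shiftLetter
  split_ifs <;> first | contradiction | omega

lemma apply_mul_s_of_mem_des {u : Perm (Fin n)} {k a : ℕ} (hk : k < n)
    (hu : (u ⟨k, hk⟩ : ℕ) = 0) (ha : a ∈ des u) (hak : a ≠ k) :
    ((u * s n a) ⟨k, hk⟩ : ℕ) = 0 := by
  rwa [Perm.mul_apply, s_apply_of_ne hk hak]
  rintro rfl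
  exact succ_not_mem_des_of_apply_eq_zero hk hu ha

lemma mul_s_mul_frontCycle {u : Perm (Fin n)} {k a : ℕ} (hk : k < n)
    (hu : (u ⟨k, hk⟩ : ℕ) = 0) (ha : a ∈ des u) (hak : a ≠ k) :
    u * s n a * frontCycle n k = u * frontCycle n k * s n (shiftLetter k a) := by
  obtain ⟨⟨h1, h2⟩, -⟩ := mem_des_iff.1 ha
  have hak' : a ≠ k + 1 := by
    rintro rfl
    exact succ_not_mem_des_of_apply_eq_zero hk hu ha
  rw [mul_assoc, s_mul_frontCycle h1 h2 hk hak hak', mul_assoc]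

lemma shiftLetter_mem_des_mul_frontCycle {u : Perm (Fin n)} {k a : ℕ} (hk : k < n)
    (hu : (u ⟨k, hk⟩ : ℕ) = 0) (ha : a ∈ des u) (hak : a ≠ k) :
    shiftLetter k a ∈ des (u * frontCycle n k) := by
  obtain ⟨⟨h1, h2⟩, -⟩ := mem_des_iff.1 ha
  refine mem_des_of_len_mul_s_lt (h1.trans (le_shiftLetter k a)) (shiftLetter_lt hk h2) ?_
  have := len_mul_frontCycle hk hu
  have := len_mul_frontCycle hk (apply_mul_s_of_mem_des hk hu ha hak)
  have := len_mul_s_of_mem_des ha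
  rw [← mul_s_mul_frontCycle hk hu ha hak]
  omega

lemma sum_erase_des_le_len_mul_Upsilon {u : Perm (Fin n)} {k : ℕ} (hk : k < n)
    (hu : (u ⟨k, hk⟩ : ℕ) = 0)
    (hmono : ∀ a ∈ des u, a ≠ k →
      Upsilon (u * s n a) ≤ Upsilon (u * s n a * frontCycle n k)) :
    ∑ a ∈ (des u).erase k, (a : ℚ) * Upsilon (u * s n a) ≤
      len (u * frontCycle n k) * Upsilon (u * frontCycle n k) := by
  set M := u * frontCycle n k
  rw [len_mul_Upsilon M]
  refine sum_le_sum_of_mapsTo_of_injOn (shiftLetter k)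
    (fun a ha => shiftLetter_mem_des_mul_frontCycle hk hu (mem_erase.1 ha).2 (mem_erase.1 ha).1)
    ((shiftLetter_injOn k).mono fun a ha => (mem_erase.1 ha).1) (fun a ha => ?_)
    (fun b _ => by have := Upsilon_nonneg (M * s n b); positivity)
  obtain ⟨hak, ha⟩ := mem_erase.1 ha
  have := Upsilon_nonneg (M * s n (shiftLetter k a))
  calc (a : ℚ) * Upsilon (u * s n a)
      ≤ a * Upsilon (u * s n a * frontCycle n k) := by gcongr; exact hmono a ha hak
    _ = a * Upsilon (M * s n (shiftLetter k a)) := by rw [mul_s_mul_frontCycle hk hu ha hak]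
    _ ≤ shiftLetter k a * Upsilon (M * s n (shiftLetter k a)) := by
        gcongr
        exact le_shiftLetter k a

theorem Upsilon_le_Upsilon_mul_frontCycle {u : Perm (Fin n)} {k : ℕ} (hk : k < n)
    (hu : (u ⟨k, hk⟩ : ℕ) = 0) : Upsilon u ≤ Upsilon (u * frontCycle n k) := by
  rcases k with _ | m
  · simp [frontCycle]
  set M := u * frontCycle n (m + 1)
  have hkdes := succ_mem_des_of_apply_eq_zero hk hu
  have hfirst :
      ((m + 1 : ℕ) : ℚ) * Upsilon (u * s n (m + 1)) ≤ (m + 1 : ℕ) * Upsilon M := by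
    have hv : ((u * s n (m + 1)) ⟨m, by omega⟩ : ℕ) = 0 := by
      rwa [Perm.mul_apply, s_succ_apply_self hk]
    gcongr
    simpa [M, frontCycle, mul_assoc] using Upsilon_le_Upsilon_mul_frontCycle (by omega) hv
  have hrest := sum_erase_des_le_len_mul_Upsilon hk hu fun a ha hak =>
    Upsilon_le_Upsilon_mul_frontCycle hk (apply_mul_s_of_mem_des hk hu ha hak)
  have hpos : (0 : ℚ) < len u := by
    have := len_mul_s_of_mem_des hkdes
    exact_mod_cast (by omega : 0 < len u)
  refine le_of_mul_le_mul_left ?_ hpos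
  calc (len u : ℚ) * Upsilon u
      = (m + 1 : ℕ) * Upsilon (u * s n (m + 1)) +
          ∑ a ∈ (des u).erase (m + 1), (a : ℚ) * Upsilon (u * s n a) := by
        rw [len_mul_Upsilon, ← add_sum_erase _ _ hkdes]
    _ ≤ (m + 1 : ℕ) * Upsilon M + len M * Upsilon M := add_le_add hfirst hrest
    _ = len u * Upsilon M := by
        rw [← len_mul_frontCycle hk hu]
        push_cast
        ring
termination_by len u
decreasing_by
  · exact Nat.lt_of_succ_le (len_mul_s_of_mem_des hkdes).le
  · exact Nat.lt_of_succ_le (len_mul_s_of_mem_des ha).le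

/-- for every `n ≥ 1` there is a permutation `w ∈ S_n`
with `w(1) = 1` attaining the maximum of `Υ` over `S_n`. -/
theorem exists_max_with_first_fixed (n : ℕ) (hn : 1 ≤ n) :
    ∃ w : Perm (Fin n), app w 1 = 1 ∧
      ∀ v : Perm (Fin n), Upsilon v ≤ Upsilon w := by
  obtain ⟨w, hw⟩ := Finite.exists_max (Upsilon (n := n))
  set k := w.symm ⟨0, hn⟩
  have hwk : w k = ⟨0, hn⟩ := w.apply_symm_apply _
  have hfront : frontCycle n k ⟨0, hn⟩ = k := Fin.ext (by simp [frontCycle_apply_val k.isLt])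
  refine ⟨w * frontCycle n k, by simp [app, hfront, hwk], fun v => (hw v).trans ?_⟩
  exact Upsilon_le_Upsilon_mul_frontCycle k.isLt (by simp [hwk])

end Schubert
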